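/- The 14-point plane Q (with points a,b,c,d,e,f,g,h,k,l,m,n,o and lines given by the columns {a,b,c,d,e}, {c,n,l,f}, {e,o,l,f}, {a,f,g,h}, {b,k,l,m}, {d,n,k,f}, {d,o,m,h}, {c,k,g}, {e,m,g}, {a,k,o}, {b,n,o}, together with all remaining 2-point lines) has trivial automorphism group. -/

import Mathlib

/-- A plane: a two-sorted point-line incidence system satisfying axioms (A)-(D). -/
structure IsPlane {Pt Ln : Type} (inc : Pt → Ln → Prop) : Prop where
  unique_line : ∀ p q : Pt, p ≠ q → ∃! l : Ln, inc p l ∧ inc q l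
  unique_point : ∀ l m : Ln, l ≠ m → ∀ p q : Pt,
    inc p l → inc p m → inc q l → inc q m → p = q
  two_points : ∀ l : Ln, ∃ p q : Pt, p ≠ q ∧ inc p l ∧ inc q l
  nondeg : ∃ p q r : Pt, p ≠ q ∧ p ≠ r ∧ q ≠ r ∧
    ∀ l : Ln, ¬ (inc p l ∧ inc q l ∧ inc r l)

/-- Three points are collinear if some line is incident with all three. -/
def PlaneCollinear {Pt Ln : Type} (inc : Pt → Ln → Prop) (p q r : Pt) : Prop :=
  ∃ l : Ln, inc p l ∧ inc q l ∧ inc r l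

/-- The points of Ditor's rigid plane `Q`. -/
inductive QPt : Type
  | a | b | c | d | e | f | g | h | k | l | m | n | o
deriving DecidableEq

open QPt in
/-- The nontrivial lines of the plane `Q` (all other lines are two-point lines). -/
def QLines : Set (Set QPt) :=
  {{a, b, c, d, e}, {c, n, l, f}, {e, o, l, f}, {a, f, g, h}, {b, k, l, m},
   {d, n, k, f}, {d, o, m, h}, {c, k, g}, {e, m, g}, {a, k, o}, {b, n, o}}

/-- Collinearity in the plane `Q`: three pairwise distinct points lying on a common
(nontrivial) line. -/
def QCol (x y z : QPt) : Prop :=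
  x ≠ y ∧ x ≠ z ∧ y ≠ z ∧ ∃ S ∈ QLines, x ∈ S ∧ y ∈ S ∧ z ∈ S

instance : Fintype QPt where
  elems := {QPt.a, QPt.b, QPt.c, QPt.d, QPt.e, QPt.f, QPt.g, QPt.h, QPt.k, QPt.l, QPt.m, QPt.n, QPt.o}
  complete := by intro x; cases x <;> decide

open QPt in
/-- The nontrivial lines of `Q`, as a list of finsets (for decidability). -/
def qlines : List (Finset QPt) :=
  [{a, b, c, d, e}, {c, n, l, f}, {e, o, l, f}, {a, f, g, h}, {b, k, l, m},
   {d, n, k, f}, {d, o, m, h}, {c, k, g}, {e, m, g}, {a, k, o}, {b, n, o}]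

/-- Decidable version of `QCol`. -/
def QColD (x y z : QPt) : Prop :=
  x ≠ y ∧ x ≠ z ∧ y ≠ z ∧ ∃ S ∈ qlines, x ∈ S ∧ y ∈ S ∧ z ∈ S

instance (x y z : QPt) : Decidable (QColD x y z) := by unfold QColD; infer_instance

lemma qcol_iff (x y z : QPt) : QCol x y z ↔ QColD x y z := by
  simp [QCol, QColD, QLines, qlines]

/-- The number of ordered pairs `(y, z)` such that `x, y, z` is a collinear triple. -/
def Ndeg (x : QPt) : ℕ :=
  (Finset.univ.filter (fun p : QPt × QPt => QColD x p.1 p.2)).card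

lemma Ndeg_inv (σ : Equiv.Perm QPt)
    (hc : ∀ x y z : QPt, QColD x y z ↔ QColD (σ x) (σ y) (σ z)) (x : QPt) :
    Ndeg (σ x) = Ndeg x := by
  unfold Ndeg
  apply Finset.card_bij' (fun p _ => (σ.symm p.1, σ.symm p.2)) (fun p _ => (σ p.1, σ p.2))
  · intro p hp
    simp only [Finset.mem_filter, Finset.mem_univ, true_and] at hp ⊢
    rw [hc x (σ.symm p.1) (σ.symm p.2), σ.apply_symm_apply, σ.apply_symm_apply]
    exact hp
  · intro p hp
    simp only [Finset.mem_filter, Finset.mem_univ, true_and] at hp ⊢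
    exact (hc x p.1 p.2).mp hp
  · intro p _; simp
  · intro p _; simp

/-- Ditor's plane `Q` has trivial automorphism group: every permutation of its points
mapping collinear triples to collinear triples and non-collinear triples to
non-collinear triples is the identity. -/
theorem stmt5 (f : Equiv.Perm QPt)
    (hf : ∀ x y z : QPt, QCol x y z ↔ QCol (f x) (f y) (f z)) :
    f = Equiv.refl QPt := by
  have hc : ∀ x y z : QPt, QColD x y z ↔ QColD (f x) (f y) (f z) := fun x y z => by
    rw [← qcol_iff, ← qcol_iff]; exact hf x y z
  have hN : ∀ x, Ndeg (f x) = Ndeg x := Ndeg_inv f hc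
  -- points with a unique invariant value
  have hg : f QPt.g = QPt.g := by
    have h10 : ∀ y, Ndeg y = 10 → y = QPt.g := by decide
    exact h10 _ ((hN QPt.g).trans (by decide))
  have hh : f QPt.h = QPt.h := by
    have h12 : ∀ y, Ndeg y = 12 → y = QPt.h := by decide
    exact h12 _ ((hN QPt.h).trans (by decide))
  have hl : f QPt.l = QPt.l := by
    have h18 : ∀ y, Ndeg y = 18 → y = QPt.l := by decide
    exact h18 _ ((hN QPt.l).trans (by decide))
  -- the class {d, f}
  have h24 : ∀ y, Ndeg y = 24 → y = QPt.d ∨ y = QPt.f := by decide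
  have hd : f QPt.d = QPt.d := by
    rcases h24 _ ((hN QPt.d).trans (by decide)) with h | h
    · exact h
    · exfalso
      have h2 : QColD QPt.d QPt.l (f.symm QPt.c) := by
        rw [hc, h, hl, f.apply_symm_apply]
        decide
      exact (by decide : ∀ w, ¬ QColD QPt.d QPt.l w) _ h2
  have hff : f QPt.f = QPt.f := by
    rcases h24 _ ((hN QPt.f).trans (by decide)) with h | h
    · exact absurd (f.injective (h.trans hd.symm)) (by decide)
    · exact h
  -- the class {k, o}
  have h16 : ∀ y, Ndeg y = 16 → y = QPt.k ∨ y = QPt.o := by decide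
  have ho : f QPt.o = QPt.o := by
    rcases h16 _ ((hN QPt.o).trans (by decide)) with h | h
    · exfalso
      have h2 : QColD QPt.o QPt.g (f.symm QPt.c) := by
        rw [hc, h, hg, f.apply_symm_apply]
        decide
      exact (by decide : ∀ w, ¬ QColD QPt.o QPt.g w) _ h2
    · exact h
  have hk : f QPt.k = QPt.k := by
    rcases h16 _ ((hN QPt.k).trans (by decide)) with h | h
    · exact h
    · exact absurd (f.injective (h.trans ho.symm)) (by decide)
  -- the class {m, n}
  have h14 : ∀ y, Ndeg y = 14 → y = QPt.m ∨ y = QPt.n := by decide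
  have hn : f QPt.n = QPt.n := by
    rcases h14 _ ((hN QPt.n).trans (by decide)) with h | h
    · exfalso
      have h2 : QColD QPt.n QPt.g (f.symm QPt.e) := by
        rw [hc, h, hg, f.apply_symm_apply]
        decide
      exact (by decide : ∀ w, ¬ QColD QPt.n QPt.g w) _ h2
    · exact h
  have hm : f QPt.m = QPt.m := by
    rcases h14 _ ((hN QPt.m).trans (by decide)) with h | h
    · exact h
    · exact absurd (f.injective (h.trans hn.symm)) (by decide)
  -- the class {a, b, c, e}
  have h20 : ∀ y, Ndeg y = 20 →
      y = QPt.a ∨ y = QPt.b ∨ y = QPt.c ∨ y = QPt.e := by decide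
  have ha : f QPt.a = QPt.a := by
    have h1 : QColD (f QPt.a) QPt.g QPt.h := by
      rw [← hg, ← hh, ← hc]; decide
    have h2 : ∀ y, QColD y QPt.g QPt.h → y = QPt.a ∨ y = QPt.f := by decide
    rcases h2 _ h1 with h | h
    · exact h
    · exact absurd (f.injective (h.trans hff.symm)) (by decide)
  have hcc : f QPt.c = QPt.c := by
    have h1 : QColD (f QPt.c) QPt.k QPt.g := by
      rw [← hk, ← hg, ← hc]; decide
    exact (by decide : ∀ y, QColD y QPt.k QPt.g → y = QPt.c) _ h1
  have he : f QPt.e = QPt.e := by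
    have h1 : QColD (f QPt.e) QPt.m QPt.g := by
      rw [← hm, ← hg, ← hc]; decide
    exact (by decide : ∀ y, QColD y QPt.m QPt.g → y = QPt.e) _ h1
  have hb : f QPt.b = QPt.b := by
    rcases h20 _ ((hN QPt.b).trans (by decide)) with h | h | h | h
    · exact absurd (f.injective (h.trans ha.symm)) (by decide)
    · exact h
    · exact absurd (f.injective (h.trans hcc.symm)) (by decide)
    · exact absurd (f.injective (h.trans he.symm)) (by decide)
  apply Equiv.ext
  intro x
  cases x
  · exact ha
  · exact hb
  · exact hcc
  · exact hd
  · exact he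
  · exact hff
  · exact hg
  · exact hh
  · exact hk
  · exact hl
  · exact hm
  · exact hn
  · exact ho
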